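/- arXiv:2407.17068 — 5 statements merged into one kernel-verified Lean document; each statement's English description precedes it below -/
import Mathlib

section
/- Let R be a finite set, c : R → ℕ a coloring, J ⊆ R nonempty, and m := |c(J) ∩ c(R \ J)|. Let {A_1, ..., A_k} be a partition of R such that A_ℓ ∩ J ≠ ∅ for all ℓ. Then ∑_{ℓ=1}^k |c(A_ℓ)| ≥ |c(R \ J)| + k - m. -/
/-! Pick `x i ∈ A i ∩ J` and count colour by colour. The number of blocks whose image contains a
colour `t` is at least the number of `i` with `c (x i) = t`, and at least `1` if `t ∈ c(R \ J)`.
These fibres only occur at colours of `c(J)`, so the two bounds add up except at the colours of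
`c(J) ∩ c(R \ J)`, where at most one unit is lost. Summing over all colours gives the inequality. -/

open Finset

section

variable {ι α β : Type*} [Fintype ι] [DecidableEq β]

theorem Finset.sum_card_eq_sum_card_filter_mem {B : ι → Finset β} {U : Finset β}
    (hB : ∀ i, B i ⊆ U) : ∑ i, #(B i) = ∑ t ∈ U, #{i | t ∈ B i} := by
  simp_rw [card_eq_sum_ones, sum_filter]
  rw [sum_comm]
  refine sum_congr rfl fun i _ => ?_
  rw [← sum_filter, filter_mem_eq_inter, inter_eq_right.mpr (hB i)]

theorem ite_mem_add_card_fiber_le [DecidableEq α] {R J : Finset α} {A : ι → Finset α}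
    {c : α → β} {x : ι → α} (hcover : R ⊆ univ.biUnion A) (hx : ∀ i, x i ∈ A i ∩ J) (t : β) :
    (if t ∈ (R \ J).image c then 1 else 0) + #{i | c (x i) = t} ≤
      #{i | t ∈ (A i).image c} + if t ∈ J.image c ∩ (R \ J).image c then 1 else 0 := by
  have hfiber : #{i | c (x i) = t} ≤ #{i | t ∈ (A i).image c} :=
    card_le_card <| monotone_filter_right _ fun i _ h =>
      h ▸ mem_image_of_mem c (mem_inter.mp (hx i)).1
  by_cases hT : t ∈ (R \ J).image c
  · by_cases hJ : t ∈ J.image c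
    · simp only [hT, hJ, mem_inter, and_self, if_true]
      omega
    · have hempty : #{i | c (x i) = t} = 0 := by
        refine card_eq_zero.mpr (filter_eq_empty_iff.mpr fun i _ h => hJ ?_)
        exact h ▸ mem_image_of_mem c (mem_inter.mp (hx i)).2
      obtain ⟨y, hy, rfl⟩ := mem_image.mp hT
      obtain ⟨i, -, hyi⟩ := mem_biUnion.mp (hcover (mem_sdiff.mp hy).1)
      have hpos : 0 < #{i | c y ∈ (A i).image c} :=
        card_pos.mpr ⟨i, mem_filter.mpr ⟨mem_univ i, mem_image_of_mem c hyi⟩⟩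
      simp only [hT, hJ, hempty, mem_inter, false_and, if_true, if_false]
      omega
  · simpa only [hT, if_false, zero_add] using hfiber.trans (le_add_right le_rfl)

end

theorem coloring_partition_lemma_general {α : Type*} [DecidableEq α]
    (R : Finset α) (c : α → ℕ) (J : Finset α)
    (k : ℕ) (A : Fin k → Finset α)
    (hcover : Finset.univ.biUnion A = R)
    (hmeet : ∀ i : Fin k, (A i ∩ J).Nonempty) :
    ((R \ J).image c).card + k ≤
      (∑ i : Fin k, ((A i).image c).card) + ((J.image c) ∩ ((R \ J).image c)).card := by
  have hTU : (R \ J).image c ⊆ univ.biUnion fun i => (A i).image c :=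
    hcover ▸ (image_subset_image sdiff_subset).trans biUnion_image.le
  set T := (R \ J).image c
  set U := univ.biUnion fun i => (A i).image c
  choose x hx using hmeet
  have hxU : ∀ i ∈ (univ : Finset (Fin k)), c (x i) ∈ U := fun i _ =>
    mem_biUnion.mpr ⟨i, mem_univ i, mem_image_of_mem c (mem_inter.mp (hx i)).1⟩
  calc #T + k = ∑ t ∈ U, ((if t ∈ T then 1 else 0) + #{i | c (x i) = t}) := by
        rw [sum_add_distrib, sum_boole, filter_mem_eq_inter, inter_eq_right.mpr hTU,
          ← card_eq_sum_card_fiberwise hxU, card_univ, Fintype.card_fin, Nat.cast_id]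
    _ ≤ ∑ t ∈ U, (#{i | t ∈ (A i).image c} + if t ∈ J.image c ∩ T then 1 else 0) :=
        sum_le_sum fun t _ => ite_mem_add_card_fiber_le hcover.ge hx t
    _ = _ := by
        rw [sum_add_distrib, ← sum_card_eq_sum_card_filter_mem fun i => subset_biUnion_of_mem
          (fun i => (A i).image c) (mem_univ i), sum_boole, filter_mem_eq_inter,
          inter_eq_right.mpr (inter_subset_right.trans hTU), Nat.cast_id]

/-- Coloring lemma: if `{A_ℓ}` is a partition of `R` with every block meeting `J ⊆ R`, and
`m = |c(J) ∩ c(R \ J)|`, then `∑_ℓ |c(A_ℓ)| ≥ |c(R \ J)| + k - m`. -/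
theorem coloring_partition_lemma {α : Type*} [DecidableEq α]
    (R : Finset α) (c : α → ℕ) (J : Finset α) (hJR : J ⊆ R) (hJne : J.Nonempty)
    (k : ℕ) (A : Fin k → Finset α)
    (hcover : Finset.univ.biUnion A = R)
    (hdisj : ∀ i j : Fin k, i ≠ j → Disjoint (A i) (A j))
    (hmeet : ∀ i : Fin k, (A i ∩ J).Nonempty) :
    ((R \ J).image c).card + k ≤
      (∑ i : Fin k, ((A i).image c).card) + ((J.image c) ∩ ((R \ J).image c)).card :=
  coloring_partition_lemma_general R c J k A hcover hmeet
end

section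
/- The unique sequence (a_n)_{n≥1} of real numbers satisfying a_1 = 1 and a_n = 2·∑_{m=1}^{n-1} a_m a_{n-m} for n ≥ 2 is given by a_n = (2^n / (4(2n-1))) · (2n)!/(n!)². -/
/-!
Shifting the index, `b n = a (n + 1)` satisfies the Catalan recursion with an extra factor `2` per
step, so `a (n + 1) = 2 ^ n * catalan n`; the closed form is then
`catalan n = centralBinom (n + 1) / (2 * (2 * n + 1))` with `centralBinom n = (2n)! / (n!)²`.
-/

open Finset Nat

theorem eq_pow_mul_catalan_of_antidiagonal_recursion {R : Type*} [CommSemiring R] (c : R)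
    (b : ℕ → R) (h0 : b 0 = 1)
    (hrec : ∀ n, b (n + 1) = c * ∑ p ∈ antidiagonal n, b p.1 * b p.2) (n : ℕ) :
    b n = c ^ n * catalan n := by
  induction n using Nat.strong_induction_on with
  | _ n ih =>
    obtain _ | n := n
    · simp [h0]
    have hterm : ∀ p ∈ antidiagonal n,
        b p.1 * b p.2 = c ^ n * (catalan p.1 * catalan p.2 : ℕ) := by
      intro p hp
      rw [HasAntidiagonal.mem_antidiagonal] at hp
      rw [ih p.1 (by omega), ih p.2 (by omega), ← hp, pow_add]
      push_cast
      ring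
    rw [hrec, sum_congr rfl hterm, ← mul_sum, ← Nat.cast_sum, ← catalan_succ']
    ring

theorem Nat.cast_centralBinom_eq_factorial_div {K : Type*} [DivisionRing K] [CharZero K]
    (n : ℕ) : (n.centralBinom : K) = (2 * n)! / (n ! : K) ^ 2 := by
  rw [Nat.centralBinom_eq_two_mul_choose, Nat.cast_choose K (by omega),
    show 2 * n - n = n by omega, sq]

theorem cast_catalan_eq_centralBinom_succ_div {K : Type*} [DivisionRing K] [CharZero K]
    (n : ℕ) : (catalan n : K) = (n + 1).centralBinom / (2 * (2 * n + 1)) := by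
  have hpos : (2 * (2 * n + 1) : K) ≠ 0 := by exact_mod_cast (by omega : 2 * (2 * n + 1) ≠ 0)
  have hnat : catalan n * (2 * (2 * n + 1)) = (n + 1).centralBinom := by
    refine Nat.eq_of_mul_eq_mul_left (by omega : 0 < n + 1) ?_
    rw [Nat.succ_mul_centralBinom_succ, ← succ_mul_catalan_eq_centralBinom]
    ring
  rw [eq_div_iff hpos]
  exact_mod_cast hnat

/-- The unique sequence with `a_1 = 1` and `a_n = 2 ∑_{m=1}^{n-1} a_m a_{n-m}` for `n ≥ 2`
is `a_n = (2^n / (4(2n-1))) · (2n)!/(n!)²`. -/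
theorem catalan_type_recursion_closed_form (a : ℕ → ℝ) (h1 : a 1 = 1)
    (hrec : ∀ n, 2 ≤ n → a n = 2 * ∑ m ∈ Finset.Ico 1 n, a m * a (n - m)) :
    ∀ n, 1 ≤ n →
      a n = (2 : ℝ) ^ n / (4 * (2 * (n : ℝ) - 1)) *
        ((Nat.factorial (2 * n) : ℝ) / ((Nat.factorial n : ℝ)) ^ 2) := by
  have hshift (n : ℕ) :
      a (n + 2) = 2 * ∑ p ∈ antidiagonal n, a (p.1 + 1) * a (p.2 + 1) := by
    rw [hrec _ (by omega), sum_Ico_eq_sum_range, Nat.sum_antidiagonal_eq_sum_range_succ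
      (fun i j => a (i + 1) * a (j + 1))]
    refine congrArg _ (sum_congr (by simp) fun i hi => ?_)
    rw [mem_range] at hi
    rw [add_comm 1 i, show n + 2 - (i + 1) = n - i + 1 by omega]
  have hcat := eq_pow_mul_catalan_of_antidiagonal_recursion (2 : ℝ) (fun n => a (n + 1)) h1 hshift
  intro n hn
  obtain ⟨m, rfl⟩ : ∃ m, n = m + 1 := ⟨n - 1, by omega⟩
  rw [hcat, cast_catalan_eq_centralBinom_succ_div, Nat.cast_centralBinom_eq_factorial_div]
  generalize ((2 * (m + 1))! / ((m + 1)! : ℝ) ^ 2 : ℝ) = q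
  have hden : (2 * (m : ℝ) + 1) ≠ 0 := by positivity
  push_cast
  rw [show 2 * ((m : ℝ) + 1) - 1 = 2 * m + 1 by ring]
  field_simp
  ring
end

section
/- Suppose (b_n)_{n≥1} is a sequence of nonnegative reals with b_1 ≤ 1 and b_n ≤ 2·∑_{m=1}^{n-1} b_m b_{n-m} for all n ≥ 2. Then b_n ≤ 8^{n-1}/(2n-1) for all n ≥ 1. -/
open Finset

/-!
The sequence `a n = 2 ^ (n - 1) * catalan (n - 1)` satisfies the recursion with equality, because
the Catalan numbers satisfy `C (k + 1) = ∑ C i * C (k - i)`; by strong induction it dominates every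
nonnegative subsolution. The bound then comes from `(2k + 1) C k = (2k + 1).choose k ≤ 4 ^ k`.
-/

theorem two_mul_add_one_mul_catalan (k : ℕ) : (2 * k + 1) * catalan k = (2 * k + 1).choose k := by
  apply Nat.eq_of_mul_eq_mul_left k.succ_pos
  rw [mul_left_comm, succ_mul_catalan_eq_centralBinom, Nat.centralBinom, Nat.add_one_mul_choose_eq,
    Nat.choose_symm_half, mul_comm]

theorem two_mul_add_one_mul_catalan_le_four_pow (k : ℕ) : (2 * k + 1) * catalan k ≤ 4 ^ k :=
  two_mul_add_one_mul_catalan k ▸ Nat.choose_middle_le_pow k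

theorem le_of_le_mul_sum_Ico_mul {a b : ℕ → ℝ} {c : ℝ} (hc : 0 ≤ c) (hb : ∀ n, 1 ≤ n → 0 ≤ b n)
    (h1 : b 1 ≤ a 1) (hb_rec : ∀ n, 2 ≤ n → b n ≤ c * ∑ m ∈ Ico 1 n, b m * b (n - m))
    (ha_rec : ∀ n, 2 ≤ n → c * ∑ m ∈ Ico 1 n, a m * a (n - m) ≤ a n) :
    ∀ n, 1 ≤ n → b n ≤ a n := by
  intro n
  induction n using Nat.strong_induction_on with
  | _ n ih =>
    intro hn
    obtain rfl | hn2 : n = 1 ∨ 2 ≤ n := by omega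
    · exact h1
    calc b n ≤ c * ∑ m ∈ Ico 1 n, b m * b (n - m) := hb_rec n hn2
      _ ≤ c * ∑ m ∈ Ico 1 n, a m * a (n - m) := by
        refine mul_le_mul_of_nonneg_left (sum_le_sum fun m hm => ?_) hc
        obtain ⟨hm1, hmn⟩ := mem_Ico.mp hm
        have hbm := ih m hmn hm1
        exact mul_le_mul hbm (ih _ (by omega) (by omega)) (hb _ (by omega)) ((hb m hm1).trans hbm)
      _ ≤ a n := ha_rec n hn2

noncomputable def scaledCatalan (n : ℕ) : ℝ := 2 ^ (n - 1) * catalan (n - 1)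

theorem two_mul_sum_Ico_scaledCatalan {n : ℕ} (hn : 2 ≤ n) :
    2 * ∑ m ∈ Ico 1 n, scaledCatalan m * scaledCatalan (n - m) = scaledCatalan n := by
  obtain ⟨k, rfl⟩ : ∃ k, n = k + 2 := ⟨n - 2, by omega⟩
  have hterm : ∀ i ∈ range (k + 1), 2 * (scaledCatalan (1 + i) * scaledCatalan (k + 2 - (1 + i)))
      = 2 ^ (k + 1) * (catalan i * catalan (k - i) : ℝ) := by
    intro i hi
    have hik : i ≤ k := Nat.lt_succ_iff.mp (mem_range.mp hi)
    rw [scaledCatalan, scaledCatalan, show k + 2 - (1 + i) - 1 = k - i by omega,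
      Nat.add_sub_cancel_left, show k + 1 = 1 + i + (k - i) by omega, pow_add, pow_add]
    ring
  rw [sum_Ico_eq_sum_range, mul_sum, show k + 2 - 1 = k + 1 from rfl, sum_congr rfl hterm, ← mul_sum,
    scaledCatalan, show k + 2 - 1 = k + 1 from rfl, catalan_succ, Fin.sum_univ_eq_sum_range
      (fun i => catalan i * catalan (k - i)), Nat.cast_sum]
  push_cast
  rfl

theorem scaledCatalan_le {n : ℕ} (hn : 1 ≤ n) :
    scaledCatalan n ≤ (8 : ℝ) ^ (n - 1) / (2 * (n : ℝ) - 1) := by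
  obtain ⟨k, rfl⟩ : ∃ k, n = k + 1 := ⟨n - 1, by omega⟩
  have hcat : ((2 * k + 1 : ℕ) : ℝ) * catalan k ≤ 4 ^ k := by
    exact_mod_cast two_mul_add_one_mul_catalan_le_four_pow k
  push_cast at hcat
  rw [scaledCatalan, Nat.add_sub_cancel,
    le_div_iff₀ (by push_cast; linarith [k.cast_nonneg (α := ℝ)]),
    show (8 : ℝ) ^ k = 2 ^ k * 4 ^ k by rw [← mul_pow]; norm_num]
  push_cast
  calc 2 ^ k * (catalan k : ℝ) * (2 * (k + 1) - 1) = 2 ^ k * ((2 * k + 1) * catalan k) := by ring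
    _ ≤ 2 ^ k * 4 ^ k := by gcongr

/-- If `b_1 ≤ 1`, the `b_n ≥ 0`, and `b_n ≤ 2 ∑_{m=1}^{n-1} b_m b_{n-m}` for `n ≥ 2`,
then `b_n ≤ 8^{n-1}/(2n-1)` for all `n ≥ 1`. -/
theorem catalan_type_recursion_bound (b : ℕ → ℝ)
    (hpos : ∀ n, 1 ≤ n → 0 ≤ b n) (h1 : b 1 ≤ 1)
    (hrec : ∀ n, 2 ≤ n → b n ≤ 2 * ∑ m ∈ Finset.Ico 1 n, b m * b (n - m)) :
    ∀ n, 1 ≤ n → b n ≤ (8 : ℝ) ^ (n - 1) / (2 * (n : ℝ) - 1) := by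
  have hb : ∀ n, 1 ≤ n → b n ≤ scaledCatalan n :=
    le_of_le_mul_sum_Ico_mul zero_le_two hpos (by simpa [scaledCatalan] using h1) hrec
      fun n hn => (two_mul_sum_Ico_scaledCatalan hn).le
  exact fun n hn => (hb n hn).trans (scaledCatalan_le hn)
end

section
/- Let F be a symmetric (exchangeable) probability measure on the sphere S^{N-1}(√N) ⊂ ℝ^N (so ∑_{i=1}^N v_i² = N almost surely), with N ≥ 2. Write e_i := v_i². Then for all 1 ≤ n ≤ N/2 + 1, the non-repeated energy moments satisfy 0 ≤ E[e_1 e_2 ⋯ e_n] ≤ 2^{n-1}. -/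
/-!
Write `m k = E[e_1 ⋯ e_k]`. Multiplying `e_1 ⋯ e_k` by `∑ e_i = N` and dropping the nonnegative
terms with `i ≤ k` gives `N e_1 ⋯ e_k ≥ ∑_{i > k} e_i e_1 ⋯ e_k`, and by exchangeability each of
the `N - k` terms on the right has expectation `m (k + 1)`. Hence `(N - k) m (k + 1) ≤ N m k`,
so `m 1 ≤ m 0 = 1` and `m (k + 1) ≤ 2 m k` as long as `k ≤ N / 2`.
-/

open MeasureTheory Finset

section EnergyMoment

variable {ι : Type*} {μ : Measure (ι → ℝ)}

noncomputable def energyMoment (μ : Measure (ι → ℝ)) (s : Finset ι) : ℝ :=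
  ∫ v, ∏ i ∈ s, v i ^ 2 ∂μ

lemma measurable_prod_sq (s : Finset ι) : Measurable fun v : ι → ℝ => ∏ i ∈ s, v i ^ 2 := by
  fun_prop

lemma energyMoment_nonneg (s : Finset ι) : 0 ≤ energyMoment μ s :=
  integral_nonneg fun _ => prod_nonneg fun _ _ => sq_nonneg _

lemma energyMoment_empty [IsProbabilityMeasure μ] : energyMoment μ ∅ = 1 := by
  simp [energyMoment]

lemma integrable_prod_sq [Fintype ι] [IsFiniteMeasure μ] {r : ℝ}
    (hsphere : ∀ᵐ v ∂μ, ∑ i, v i ^ 2 = r) (s : Finset ι) :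
    Integrable (fun v => ∏ i ∈ s, v i ^ 2) μ := by
  refine Integrable.of_bound (measurable_prod_sq s).aestronglyMeasurable (r ^ s.card) ?_
  filter_upwards [hsphere] with v hv
  have hle : ∀ i ∈ s, v i ^ 2 ≤ r := fun i _ =>
    hv ▸ single_le_sum (f := fun j => v j ^ 2) (fun _ _ => sq_nonneg _) (mem_univ i)
  rw [Real.norm_of_nonneg (prod_nonneg fun _ _ => sq_nonneg _), ← prod_const]
  exact prod_le_prod (fun _ _ => sq_nonneg _) hle

lemma integral_comp_perm (hsym : ∀ σ : Equiv.Perm ι, μ.map (fun v => v ∘ σ) = μ)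
    (σ : Equiv.Perm ι) {f : (ι → ℝ) → ℝ} (hf : Measurable f) :
    ∫ v, f (v ∘ σ) ∂μ = ∫ v, f v ∂μ := by
  conv_rhs => rw [← hsym σ]
  have hσ : Measurable fun v : ι → ℝ => v ∘ σ :=
    measurable_pi_lambda _ fun i => measurable_pi_apply (σ i)
  exact (integral_map hσ.aemeasurable hf.aestronglyMeasurable).symm

variable [DecidableEq ι]

lemma energyMoment_insert_eq (hsym : ∀ σ : Equiv.Perm ι, μ.map (fun v => v ∘ σ) = μ)
    {s : Finset ι} {i j : ι} (hi : i ∉ s) (hj : j ∉ s) :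
    energyMoment μ (insert i s) = energyMoment μ (insert j s) := by
  rw [energyMoment, ← integral_comp_perm hsym (Equiv.swap i j) (measurable_prod_sq _)]
  refine integral_congr_ae (Filter.Eventually.of_forall fun v => ?_)
  simp only [prod_insert hi, prod_insert hj, Function.comp_apply, Equiv.swap_apply_left]
  congr 1
  refine prod_congr rfl fun t ht => ?_
  rw [Equiv.swap_apply_of_ne_of_ne (ne_of_mem_of_not_mem ht hi) (ne_of_mem_of_not_mem ht hj)]

theorem card_compl_mul_energyMoment_insert_le [Fintype ι] [IsFiniteMeasure μ]
    (hsym : ∀ σ : Equiv.Perm ι, μ.map (fun v => v ∘ σ) = μ) {r : ℝ}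
    (hsphere : ∀ᵐ v ∂μ, ∑ i, v i ^ 2 = r) {s : Finset ι} {j : ι} (hj : j ∉ s) :
    (sᶜ.card : ℝ) * energyMoment μ (insert j s) ≤ r * energyMoment μ s := by
  have hpointwise : ∀ᵐ v ∂μ,
      ∑ i ∈ sᶜ, ∏ t ∈ insert i s, v t ^ 2 ≤ r * ∏ t ∈ s, v t ^ 2 := by
    filter_upwards [hsphere] with v hv
    calc ∑ i ∈ sᶜ, ∏ t ∈ insert i s, v t ^ 2
        = ∑ i ∈ sᶜ, v i ^ 2 * ∏ t ∈ s, v t ^ 2 :=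
          sum_congr rfl fun i hi => prod_insert (mem_compl.mp hi)
      _ ≤ ∑ i, v i ^ 2 * ∏ t ∈ s, v t ^ 2 :=
          sum_le_univ_sum_of_nonneg fun _ =>
            mul_nonneg (sq_nonneg _) (prod_nonneg fun _ _ => sq_nonneg _)
      _ = r * ∏ t ∈ s, v t ^ 2 := by rw [← sum_mul, hv]
  have hint := integral_mono_ae
    (integrable_finsetSum _ fun i _ => integrable_prod_sq hsphere (insert i s))
    ((integrable_prod_sq hsphere s).const_mul r) hpointwise
  rw [integral_finsetSum _ fun i _ => integrable_prod_sq hsphere _, integral_const_mul] at hint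
  change ∑ i ∈ sᶜ, energyMoment μ (insert i s) ≤ r * energyMoment μ s at hint
  rwa [sum_congr rfl fun i hi => energyMoment_insert_eq hsym (mem_compl.mp hi) hj, sum_const,
    nsmul_eq_mul] at hint

end EnergyMoment

section Prefix

variable {N : ℕ} {μ : Measure (Fin N → ℝ)}

lemma filter_val_lt_succ {k : ℕ} (hk : k < N) :
    univ.filter (fun i : Fin N => (i : ℕ) < k + 1)
      = insert ⟨k, hk⟩ (univ.filter fun i : Fin N => (i : ℕ) < k) := by
  ext i
  simp only [mem_filter, mem_univ, true_and, mem_insert, Fin.ext_iff]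
  omega

lemma card_compl_filter_val_lt {k : ℕ} (hk : k ≤ N) :
    (univ.filter fun i : Fin N => (i : ℕ) < k)ᶜ.card = N - k := by
  rw [card_compl, Fintype.card_fin, Fin.card_filter_val_lt, min_eq_right hk]

lemma sub_mul_energyMoment_prefix_succ_le [IsFiniteMeasure μ]
    (hsym : ∀ σ : Equiv.Perm (Fin N), μ.map (fun v => v ∘ σ) = μ)
    (hsphere : ∀ᵐ v ∂μ, ∑ i, v i ^ 2 = (N : ℝ)) {k : ℕ} (hk : k < N) :
    ((N : ℝ) - k) * energyMoment μ (univ.filter fun i : Fin N => (i : ℕ) < k + 1)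
      ≤ N * energyMoment μ (univ.filter fun i : Fin N => (i : ℕ) < k) := by
  have h := card_compl_mul_energyMoment_insert_le hsym hsphere
    (s := univ.filter fun i : Fin N => (i : ℕ) < k) (j := ⟨k, hk⟩) (by simp)
  rwa [card_compl_filter_val_lt hk.le, Nat.cast_sub hk.le, ← filter_val_lt_succ hk] at h

lemma energyMoment_prefix_le_two_pow [IsProbabilityMeasure μ] (hN : 0 < N)
    (hsym : ∀ σ : Equiv.Perm (Fin N), μ.map (fun v => v ∘ σ) = μ)
    (hsphere : ∀ᵐ v ∂μ, ∑ i, v i ^ 2 = (N : ℝ)) :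
    ∀ k : ℕ, 2 * k ≤ N →
      energyMoment μ (univ.filter fun i : Fin N => (i : ℕ) < k + 1) ≤ 2 ^ k
  | 0, _ => by
    have h := sub_mul_energyMoment_prefix_succ_le hsym hsphere hN
    have hempty : (univ.filter fun i : Fin N => (i : ℕ) < 0) = ∅ := by simp
    rw [hempty, energyMoment_empty, Nat.cast_zero, sub_zero] at h
    rw [pow_zero]
    exact le_of_mul_le_mul_left h (Nat.cast_pos.mpr hN)
  | k + 1, hk => by
    set m := energyMoment μ (univ.filter fun i : Fin N => (i : ℕ) < k + 1 + 1)
    have ih := energyMoment_prefix_le_two_pow hN hsym hsphere k (by omega)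
    have h := sub_mul_energyMoment_prefix_succ_le hsym hsphere (k := k + 1) (by omega)
    have hhalf : (N : ℝ) ≤ 2 * ((N : ℝ) - (k + 1 : ℕ)) := by
      have : ((2 * (k + 1) : ℕ) : ℝ) ≤ N := Nat.cast_le.mpr hk
      push_cast at this ⊢
      linarith
    refine le_of_mul_le_mul_left ?_ (Nat.cast_pos.mpr hN)
    have hm : 0 ≤ m := energyMoment_nonneg _
    calc (N : ℝ) * m ≤ 2 * (((N : ℝ) - (k + 1 : ℕ)) * m) := by nlinarith
      _ ≤ 2 * (N * 2 ^ k) := by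
          have := mul_le_mul_of_nonneg_left ih N.cast_nonneg
          linarith
      _ = N * 2 ^ (k + 1) := by ring

end Prefix

/-- For a symmetric probability measure on the sphere `S^{N-1}(√N)` (so `∑ v_i² = N` a.s.),
with `N ≥ 2` and `1 ≤ n ≤ N/2 + 1`, the non-repeated energy moments satisfy
`0 ≤ E[e_1 ⋯ e_n] ≤ 2^{n-1}` where `e_i = v_i²`. -/
theorem nonrepeated_energy_moment_bound (N : ℕ) (hN : 2 ≤ N)
    (F : Measure (Fin N → ℝ)) [IsProbabilityMeasure F]
    (hsym : ∀ σ : Equiv.Perm (Fin N), Measure.map (fun v => v ∘ σ) F = F)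
    (hsphere : ∀ᵐ v ∂F, ∑ i, (v i) ^ 2 = (N : ℝ))
    (n : ℕ) (hn1 : 1 ≤ n) (hn2 : (n : ℝ) ≤ (N : ℝ) / 2 + 1) :
    0 ≤ ∫ v, (∏ i ∈ Finset.univ.filter (fun i : Fin N => (i : ℕ) < n), (v i) ^ 2) ∂F ∧
    ∫ v, (∏ i ∈ Finset.univ.filter (fun i : Fin N => (i : ℕ) < n), (v i) ^ 2) ∂F ≤
      (2 : ℝ) ^ (n - 1) := by
  obtain ⟨k, rfl⟩ : ∃ k, n = k + 1 := ⟨n - 1, by omega⟩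
  have hk : 2 * k ≤ N := by
    have : ((2 * k : ℕ) : ℝ) ≤ N := by push_cast at hn2 ⊢; linarith
    exact_mod_cast this
  exact ⟨energyMoment_nonneg _,
    energyMoment_prefix_le_two_pow (by omega) hsym hsphere k hk⟩
end

section
/- For any partition classifier r of order n with components r_1 ≥ ... ≥ r_n ≥ 0 summing to n, let L = len(r) be the number of nonzero components and define (M_n)_{r,r} := 2·∑_{i=1}^{L} (2 I_{r_i,0} - 1), where I_{m,0} = 2^{-2m}C(2m,m). Then (M_n)_{r,r} ≤ -(1/2)·∑_{i=1}^L 1{r_i = 2} - (3/4)·∑_{i=1}^L 1{r_i ≥ 3}; in particular, if r has at least one repeated component (some r_i ≥ 2), then (M_n)_{r,r} ≤ -1/2, and if r ≠ (2,1,...,1), then (M_n)_{r,r} ≤ -3/4. -/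
/-!
Since `I_{m,0} = 2^{-2m} C(2m,m)` decreases in `m` (the ratio of consecutive terms is
`(2m+1)/(2m+2)`) and `I_{1,0} = 1/2`, `I_{2,0} = 3/8`, `I_{3,0} = 5/16`, a component `r_i`
contributes `0`, `-1/2` or at most `-3/4` to `(M_n)_{r,r}` according as `r_i = 1`, `r_i = 2` or
`r_i ≥ 3`. Below `-3/4` is then missed only when exactly one component equals `2` and none
exceeds it, and for a decreasing `r` of sum `n` this forces `r = (2,1,…,1,0)`.
-/

open Finset

/-- `I_{m,0}` of the paper, the mean of `sin^{2m}` over a period. -/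
noncomputable def sinMoment (m : ℕ) : ℝ := (2 : ℝ) ^ (-(2 * (m : ℤ))) * (Nat.choose (2 * m) m : ℝ)

theorem Nat.centralBinom_succ_le_four_mul (m : ℕ) :
    (m + 1).centralBinom ≤ 4 * m.centralBinom := by
  refine Nat.le_of_mul_le_mul_left ?_ m.succ_pos
  rw [Nat.succ_mul_centralBinom_succ]
  nlinarith [m.centralBinom_pos]

theorem sinMoment_eq (m : ℕ) : sinMoment m = m.centralBinom / 4 ^ m := by
  rw [sinMoment, Nat.centralBinom_eq_two_mul_choose, zpow_neg, zpow_mul]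
  norm_num [div_eq_inv_mul]

theorem sinMoment_antitone : Antitone sinMoment := by
  refine antitone_nat_of_succ_le fun m => ?_
  rw [sinMoment_eq, sinMoment_eq, div_le_div_iff₀ (by positivity) (by positivity), pow_succ]
  have : ((m + 1).centralBinom : ℝ) ≤ 4 * m.centralBinom := by
    exact_mod_cast Nat.centralBinom_succ_le_four_mul m
  nlinarith [pow_pos (four_pos : (0 : ℝ) < 4) m]

theorem sinMoment_one : sinMoment 1 = 1 / 2 := by
  norm_num [sinMoment_eq, Nat.centralBinom, Nat.choose]

theorem sinMoment_two : sinMoment 2 = 3 / 8 := by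
  norm_num [sinMoment_eq, Nat.centralBinom, Nat.choose]

theorem sinMoment_three : sinMoment 3 = 5 / 16 := by
  norm_num [sinMoment_eq, Nat.centralBinom, Nat.choose]

theorem two_mul_two_mul_sinMoment_sub_one_le {m : ℕ} (hm : 0 < m) :
    2 * (2 * sinMoment m - 1) ≤
      -(1 / 2) * (if m = 2 then 1 else 0) - (3 / 4) * (if 3 ≤ m then 1 else 0) := by
  obtain rfl | rfl | h3 : m = 1 ∨ m = 2 ∨ 3 ≤ m := by omega
  · norm_num [sinMoment_one]
  · norm_num [sinMoment_two]
  · have := sinMoment_antitone h3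
    rw [sinMoment_three] at this
    simp only [show m ≠ 2 by omega, h3, if_true, if_false]
    linarith

theorem two_mul_sum_sinMoment_le {ι : Type*} [Fintype ι] (r : ι → ℕ) :
    2 * ∑ i ∈ univ.filter (fun i => 0 < r i), (2 * sinMoment (r i) - 1) ≤
      -(1 / 2) * (#(univ.filter fun i => r i = 2) : ℝ)
        - (3 / 4) * (#(univ.filter fun i => 3 ≤ r i) : ℝ) := by
  calc 2 * ∑ i ∈ univ.filter (fun i => 0 < r i), (2 * sinMoment (r i) - 1)
      ≤ ∑ i ∈ univ.filter (fun i => 0 < r i), (-(1 / 2) * (if r i = 2 then 1 else 0)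
          - (3 / 4) * (if 3 ≤ r i then 1 else 0) : ℝ) := by
        rw [mul_sum]
        exact sum_le_sum fun i hi => two_mul_two_mul_sinMoment_sub_one_le (mem_filter.mp hi).2
    _ = ∑ i, (-(1 / 2) * (if r i = 2 then 1 else 0) - (3 / 4) * (if 3 ≤ r i then 1 else 0) : ℝ) := by
        refine sum_filter_of_ne fun i _ hi => Nat.pos_of_ne_zero fun h0 => hi ?_
        simp [h0]
    _ = _ := by
        rw [sum_sub_distrib, ← mul_sum, ← mul_sum, sum_boole, sum_boole]

theorem le_apply_iff_lt_card_of_antitone {n : ℕ} {r : Fin n → ℕ} (hr : Antitone r) (k : ℕ)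
    (i : Fin n) : k ≤ r i ↔ (i : ℕ) < #(univ.filter fun j => k ≤ r j) := by
  constructor
  · intro hi
    have : Iic i ⊆ univ.filter fun j => k ≤ r j := fun j hj =>
      mem_filter.mpr ⟨mem_univ j, hi.trans (hr (mem_Iic.mp hj))⟩
    have := card_le_card this
    rw [Fin.card_Iic] at this
    omega
  · intro hi
    by_contra hni
    have : (univ.filter fun j => k ≤ r j) ⊆ Iio i := fun j hj =>
      mem_Iio.mpr (lt_of_not_ge fun hij => hni ((mem_filter.mp hj).2.trans (hr hij)))
    have := card_le_card this
    rw [Fin.card_Iio] at this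
    omega

theorem eq_two_ones_of_antitone {n : ℕ} {r : Fin n → ℕ} (hr : Antitone r) (hsum : ∑ i, r i = n)
    (hle : ∀ i, r i ≤ 2) (htwo : #(univ.filter fun i => r i = 2) = 1) :
    r = fun i : Fin n => if (i : ℕ) = 0 then 2 else if (i : ℕ) + 1 < n then 1 else 0 := by
  have hc2 : #(univ.filter fun i => 2 ≤ r i) = 1 := by
    rw [← htwo]
    congr 1
    ext i
    simp only [mem_filter, mem_univ, true_and]
    have := hle i
    omega
  have hc1 : #(univ.filter fun i => 1 ≤ r i) + 1 = n := by
    have hsplit : ∀ i, r i = (if 1 ≤ r i then 1 else 0) + (if 2 ≤ r i then 1 else 0) := by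
      intro i
      have := hle i
      split_ifs <;> omega
    calc #(univ.filter fun i => 1 ≤ r i) + 1
        = ∑ i, ((if 1 ≤ r i then 1 else 0) + (if 2 ≤ r i then 1 else 0)) := by
          rw [sum_add_distrib, sum_boole, sum_boole, hc2]
          rfl
      _ = n := by rw [← sum_congr rfl fun i _ => hsplit i, hsum]
  funext i
  have h1 := le_apply_iff_lt_card_of_antitone hr 1 i
  have h2 := le_apply_iff_lt_card_of_antitone hr 2 i
  have := hle i
  split_ifs <;> omega

theorem two_le_card_eq_two_or_pos_card_three_le {n : ℕ} {r : Fin n → ℕ} (hr : Antitone r)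
    (hsum : ∑ i, r i = n) (hbig : ∃ i, 2 ≤ r i)
    (hne : r ≠ fun i : Fin n => if (i : ℕ) = 0 then 2 else if (i : ℕ) + 1 < n then 1 else 0) :
    2 ≤ #(univ.filter fun i => r i = 2) ∨ 0 < #(univ.filter fun i => 3 ≤ r i) := by
  by_contra! h
  obtain ⟨ha, hb⟩ := h
  have hle : ∀ i, r i ≤ 2 := fun i => by
    by_contra! hi
    exact (filter_eq_empty_iff.mp (card_eq_zero.mp (Nat.le_zero.mp hb)) (mem_univ i)) hi
  obtain ⟨i, hi⟩ := hbig
  have : 0 < #(univ.filter fun i => r i = 2) :=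
    card_pos.mpr ⟨i, mem_filter.mpr ⟨mem_univ i, le_antisymm (hle i) hi⟩⟩
  exact hne (eq_two_ones_of_antitone hr hsum hle (by omega))

theorem diagonal_matrix_element_bound_general (n : ℕ) (r : Fin n → ℕ)
    (hmono : ∀ i j : Fin n, i ≤ j → r j ≤ r i)
    (hsum : ∑ i, r i = n) :
    (2 * ∑ i ∈ Finset.univ.filter (fun i : Fin n => 0 < r i),
        (2 * ((2 : ℝ) ^ (-(2 * (r i : ℤ))) * (Nat.choose (2 * r i) (r i) : ℝ)) - 1) ≤
      -(1 / 2) * ((Finset.univ.filter (fun i : Fin n => r i = 2)).card : ℝ)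
        - (3 / 4) * ((Finset.univ.filter (fun i : Fin n => 3 ≤ r i)).card : ℝ)) ∧
    ((∃ i : Fin n, 2 ≤ r i) →
      2 * ∑ i ∈ Finset.univ.filter (fun i : Fin n => 0 < r i),
        (2 * ((2 : ℝ) ^ (-(2 * (r i : ℤ))) * (Nat.choose (2 * r i) (r i) : ℝ)) - 1) ≤
      -(1 / 2)) ∧
    ((∃ i : Fin n, 2 ≤ r i) →
      r ≠ (fun i : Fin n => if (i : ℕ) = 0 then 2 else if (i : ℕ) + 1 < n then 1 else 0) →
      2 * ∑ i ∈ Finset.univ.filter (fun i : Fin n => 0 < r i),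
        (2 * ((2 : ℝ) ^ (-(2 * (r i : ℤ))) * (Nat.choose (2 * r i) (r i) : ℝ)) - 1) ≤
      -(3 / 4)) := by
  have hbound := two_mul_sum_sinMoment_le r
  simp only [sinMoment] at hbound
  set a : ℝ := (#(univ.filter fun i => r i = 2) : ℝ)
  set b : ℝ := (#(univ.filter fun i => 3 ≤ r i) : ℝ)
  have ha : (0 : ℝ) ≤ a := Nat.cast_nonneg _
  have hb : (0 : ℝ) ≤ b := Nat.cast_nonneg _
  refine ⟨hbound, fun ⟨i, hi⟩ => ?_, fun hbig hne => ?_⟩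
  · have : 1 ≤ a + b := by
      obtain h2 | h3 : r i = 2 ∨ 3 ≤ r i := by omega
      · have : (1 : ℝ) ≤ a := Nat.one_le_cast.mpr (card_pos.mpr ⟨i, by simp [h2]⟩)
        linarith
      · have : (1 : ℝ) ≤ b := Nat.one_le_cast.mpr (card_pos.mpr ⟨i, by simp [h3]⟩)
        linarith
    linarith
  · obtain h | h := two_le_card_eq_two_or_pos_card_three_le hmono hsum hbig hne
    · have : (2 : ℝ) ≤ a := Nat.ofNat_le_cast.mpr h
      linarith
    · have : (1 : ℝ) ≤ b := Nat.one_le_cast.mpr h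
      linarith

/-- For a partition classifier `r` of order `n` (decreasing components summing to `n`),
the diagonal matrix element `(M_n)_{r,r} = 2 ∑_{i : r_i > 0} (2 I_{r_i,0} - 1)`, with
`I_{m,0} = 2^{-2m} C(2m,m)`, satisfies
`(M_n)_{r,r} ≤ -(1/2)·#{i : r_i = 2} - (3/4)·#{i : r_i ≥ 3}`; in particular it is `≤ -1/2`
whenever some `r_i ≥ 2`, and `≤ -3/4` if in addition `r ≠ (2,1,…,1)`. -/
theorem diagonal_matrix_element_bound (n : ℕ) (hn : 1 ≤ n) (r : Fin n → ℕ)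
    (hmono : ∀ i j : Fin n, i ≤ j → r j ≤ r i)
    (hsum : ∑ i, r i = n) :
    (2 * ∑ i ∈ Finset.univ.filter (fun i : Fin n => 0 < r i),
        (2 * ((2 : ℝ) ^ (-(2 * (r i : ℤ))) * (Nat.choose (2 * r i) (r i) : ℝ)) - 1) ≤
      -(1 / 2) * ((Finset.univ.filter (fun i : Fin n => r i = 2)).card : ℝ)
        - (3 / 4) * ((Finset.univ.filter (fun i : Fin n => 3 ≤ r i)).card : ℝ)) ∧
    ((∃ i : Fin n, 2 ≤ r i) →
      2 * ∑ i ∈ Finset.univ.filter (fun i : Fin n => 0 < r i),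
        (2 * ((2 : ℝ) ^ (-(2 * (r i : ℤ))) * (Nat.choose (2 * r i) (r i) : ℝ)) - 1) ≤
      -(1 / 2)) ∧
    ((∃ i : Fin n, 2 ≤ r i) →
      r ≠ (fun i : Fin n => if (i : ℕ) = 0 then 2 else if (i : ℕ) + 1 < n then 1 else 0) →
      2 * ∑ i ∈ Finset.univ.filter (fun i : Fin n => 0 < r i),
        (2 * ((2 : ℝ) ^ (-(2 * (r i : ℤ))) * (Nat.choose (2 * r i) (r i) : ℝ)) - 1) ≤
      -(3 / 4)) :=
  diagonal_matrix_element_bound_general n r hmono hsum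
end
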